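/- Let X = (a_1, ..., a_m) be a finite list of nonzero vectors spanning ℂ^n, let μ : {1,...,m} → ℂ, and adopt the notation X_p, P(X,μ), L(X_p) as follows: X_p := { i : ⟨a_i | p⟩ + μ_i = 0 }, P(X,μ) := { p ∈ ℂ^n : {a_i : i ∈ X_p} spans ℂ^n }, and L(X_p) := the family of subsets ℓ ⊆ X_p with {a_i : i ∈ ℓ} spanning ℂ^n. Suppose complex numbers c_ℓ (indexed by pairs (p, ℓ) with p ∈ P(X,μ), ℓ ∈ L(X_p)) satisfy, in the field K = ℂ(x_1,...,x_n), the identity ∏_{i=1}^m 1/(a_i + μ_i) = Σ_{p ∈ P(X,μ)} Σ_{ℓ ∈ L(X_p)} c_ℓ · ∏_{i ∈ ℓ} 1/(a_i + μ_i). Then for every p ∈ P(X,μ), the coefficient attached to the full set ℓ = X_p is uniquely determined and equals c_{X_p} = ∏_{i ∉ X_p} 1/(⟨a_i | p⟩ + μ_i). -/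

import Mathlib

open MvPolynomial

/-- The linear polynomial `∑ j, a j * x j ∈ ℂ[x_1, …, x_n]` attached to a vector `a ∈ ℂ^n`. -/
noncomputable def linForm {n : ℕ} (a : Fin n → ℂ) : MvPolynomial (Fin n) ℂ :=
  ∑ j, C (a j) * X j

/-- The element `a i + μ i` of the rational function field `K = ℂ(x_1, …, x_n)`. -/
noncomputable def affForm {n m : ℕ} (a : Fin m → (Fin n → ℂ)) (μ : Fin m → ℂ) (i : Fin m) :
    FractionRing (MvPolynomial (Fin n) ℂ) :=
  algebraMap (MvPolynomial (Fin n) ℂ) (FractionRing (MvPolynomial (Fin n) ℂ))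
    (linForm (a i) + C (μ i))

/-- `X_p`: the set of indices `i` such that `⟨a i | p⟩ + μ i = 0`. -/
def Xp {n m : ℕ} (a : Fin m → (Fin n → ℂ)) (μ : Fin m → ℂ) (p : Fin n → ℂ) : Set (Fin m) :=
  {i | (∑ j, a i j * p j) + μ i = 0}

/-- `X_p` as a finite set of indices. -/
noncomputable def XpFinset {n m : ℕ} (a : Fin m → (Fin n → ℂ)) (μ : Fin m → ℂ)
    (p : Fin n → ℂ) : Finset (Fin m) :=
  (Set.toFinite (Xp a μ p)).toFinset

/-- `P(X, μ)`: the points of the arrangement, i.e. the points `p` such that the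
vectors `{a i : i ∈ X_p}` span `ℂ^n`. -/
def armPoints {n m : ℕ} (a : Fin m → (Fin n → ℂ)) (μ : Fin m → ℂ) : Set (Fin n → ℂ) :=
  {p | Submodule.span ℂ (a '' Xp a μ p) = ⊤}

/-!
Multiply the identity by `∏ i, (a i + μ i)` to get a polynomial identity
`1 = ∑_{p, ℓ} c_ℓ ∏_{i ∉ ℓ} (a i + μ i)` and evaluate it at a point `p` of the arrangement. The
summand of `(q, ℓ)` vanishes unless `X_p ⊆ ℓ ⊆ X_q`; since the `a i` with `i ∈ X_p` span `ℂ^n`,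
the affine equations indexed by `X_p` have `p` as their only common solution, so this forces
`q = p` and `ℓ = X_p`.
-/

open Finset Matrix

lemma eq_of_forall_dotProduct_eq {R ι : Type*} [CommSemiring R] [Fintype ι]
    {s : Set (ι → R)} (hs : Submodule.span R s = ⊤) {p q : ι → R}
    (h : ∀ w ∈ s, p ⬝ᵥ w = q ⬝ᵥ w) : p = q :=
  dotProduct_eq p q <| LinearMap.congr_fun <|
    LinearMap.ext_on (f := dotProductBilin R R p) (g := dotProductBilin R R q) hs h

lemma prod_inv_mul_prod_eq_prod_compl {K ι : Type*} [Field K] [Fintype ι] [DecidableEq ι]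
    {g : ι → K} (hg : ∀ i, g i ≠ 0) (s : Finset ι) :
    (∏ i ∈ s, (g i)⁻¹) * ∏ i, g i = ∏ i ∈ sᶜ, g i := by
  rw [← prod_mul_prod_compl s g, prod_inv_distrib,
    inv_mul_cancel_left₀ (prod_ne_zero_iff.2 fun i _ => hg i)]

lemma eval_linForm {n : ℕ} (a p : Fin n → ℂ) : eval p (linForm a) = a ⬝ᵥ p := by
  simp [linForm, dotProduct]

lemma linForm_add_C_ne_zero {n : ℕ} {a : Fin n → ℂ} (ha : a ≠ 0) (μ : ℂ) :
    linForm a + C μ ≠ 0 := by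
  classical
  intro h
  have h₀ := congrArg (eval 0) h
  refine ha (funext fun j => ?_)
  have hj := congrArg (eval (Pi.single j 1)) h
  simp only [eval_add, eval_linForm, eval_C, map_zero, dotProduct_zero, zero_add,
    dotProduct_single_one] at h₀ hj
  simpa [h₀] using hj

lemma affForm_ne_zero {n m : ℕ} {a : Fin m → (Fin n → ℂ)} {i : Fin m} (ha : a i ≠ 0)
    (μ : Fin m → ℂ) : affForm a μ i ≠ 0 :=
  (map_ne_zero_iff _ (IsFractionRing.injective _ _)).2 (linForm_add_C_ne_zero ha (μ i))

section Arrangement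

variable {n m : ℕ} {a : Fin m → (Fin n → ℂ)} {μ : Fin m → ℂ} {p q : Fin n → ℂ}

lemma mem_Xp {i : Fin m} : i ∈ Xp a μ p ↔ a i ⬝ᵥ p + μ i = 0 := Iff.rfl

lemma eq_of_Xp_subset (hp : p ∈ armPoints a μ) (h : Xp a μ p ⊆ Xp a μ q) : p = q := by
  refine eq_of_forall_dotProduct_eq hp ?_
  rintro _ ⟨i, hi, rfl⟩
  rw [dotProduct_comm, dotProduct_comm q]
  linear_combination (mem_Xp.1 hi) - mem_Xp.1 (h hi)

variable (a μ) in
lemma armPoints_finite : (armPoints a μ).Finite :=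
  Set.Finite.of_finite_image (Set.toFinite _) fun _ hp _ _ hpq => eq_of_Xp_subset hp hpq.le

/-- `L(X_p)`. -/
def spanningSubsets (a : Fin m → (Fin n → ℂ)) (μ : Fin m → ℂ) (p : Fin n → ℂ) :
    Set (Finset (Fin m)) :=
  {ℓ | (ℓ : Set (Fin m)) ⊆ Xp a μ p ∧ Submodule.span ℂ (a '' (ℓ : Set (Fin m))) = ⊤}

lemma coe_XpFinset : (XpFinset a μ p : Set (Fin m)) = Xp a μ p :=
  Set.Finite.coe_toFinset _

lemma XpFinset_mem_spanningSubsets (hp : p ∈ armPoints a μ) :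
    XpFinset a μ p ∈ spanningSubsets a μ p := by
  refine ⟨coe_XpFinset.subset, ?_⟩
  rwa [coe_XpFinset]

lemma prod_compl_eq_zero_of_not_subset {ℓ : Finset (Fin m)} (h : ¬Xp a μ p ⊆ ℓ) :
    ∏ i ∈ ℓᶜ, (a i ⬝ᵥ p + μ i) = 0 :=
  let ⟨_, hi, hiℓ⟩ := Set.not_subset.1 h
  prod_eq_zero (mem_compl.2 hiℓ) hi

lemma eq_XpFinset_of_Xp_subset (hp : p ∈ armPoints a μ) {ℓ : Finset (Fin m)}
    (hℓ : ℓ ∈ spanningSubsets a μ q) (h : Xp a μ p ⊆ ℓ) : q = p ∧ ℓ = XpFinset a μ p := by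
  obtain rfl : p = q := eq_of_Xp_subset hp (h.trans hℓ.1)
  exact ⟨rfl, Finset.coe_injective (coe_XpFinset.symm ▸ hℓ.1.antisymm h)⟩

lemma sum_spanningSubsets_eval (hp : p ∈ armPoints a μ)
    (d : (Fin n → ℂ) → Finset (Fin m) → ℂ) :
    ∑ q ∈ (armPoints_finite a μ).toFinset,
      ∑ ℓ ∈ (Set.toFinite (spanningSubsets a μ q)).toFinset,
        d q ℓ * ∏ i ∈ ℓᶜ, (a i ⬝ᵥ p + μ i) =
      d p (XpFinset a μ p) * ∏ i ∈ (XpFinset a μ p)ᶜ, (a i ⬝ᵥ p + μ i) := by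
  have hvanish : ∀ q, ∀ ℓ ∈ spanningSubsets a μ q, ¬(q = p ∧ ℓ = XpFinset a μ p) →
      ∏ i ∈ ℓᶜ, (a i ⬝ᵥ p + μ i) = 0 := fun q ℓ hℓ hne =>
    prod_compl_eq_zero_of_not_subset fun h => hne (eq_XpFinset_of_Xp_subset hp hℓ h)
  rw [sum_eq_single_of_mem p ((armPoints_finite a μ).mem_toFinset.2 hp),
    sum_eq_single_of_mem _ ((Set.toFinite _).mem_toFinset.2 (XpFinset_mem_spanningSubsets hp))]
  · intro ℓ hℓ hne
    rw [hvanish p ℓ ((Set.toFinite _).mem_toFinset.1 hℓ) fun h => hne h.2, mul_zero]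
  · intro q _ hne
    refine sum_eq_zero fun ℓ hℓ => ?_
    rw [hvanish q ℓ ((Set.toFinite _).mem_toFinset.1 hℓ) fun h => hne h.1, mul_zero]

end Arrangement

theorem coefficient_of_full_set_general {n m : ℕ} (a : Fin m → (Fin n → ℂ)) (μ : Fin m → ℂ)
    (ha : ∀ i, a i ≠ 0)
    (c : (Fin n → ℂ) → Finset (Fin m) → ℂ)
    (hc : ∏ i, (affForm a μ i)⁻¹ =
        ∑ᶠ p ∈ armPoints a μ,
          ∑ᶠ ℓ ∈ {ℓ : Finset (Fin m) |
              (ℓ : Set (Fin m)) ⊆ Xp a μ p ∧ Submodule.span ℂ (a '' (ℓ : Set (Fin m))) = ⊤},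
            algebraMap (MvPolynomial (Fin n) ℂ) (FractionRing (MvPolynomial (Fin n) ℂ))
                (C (c p ℓ)) *
              ∏ i ∈ ℓ, (affForm a μ i)⁻¹) :
    ∀ p ∈ armPoints a μ,
      c p (XpFinset a μ p) = ∏ i ∈ (XpFinset a μ p)ᶜ, ((∑ j, a i j * p j) + μ i)⁻¹ := by
  intro p hp
  change _ = ∑ᶠ q ∈ armPoints a μ, ∑ᶠ ℓ ∈ spanningSubsets a μ q, _ at hc
  simp only [finsum_mem_eq_finite_toFinset_sum _ (armPoints_finite a μ),
    finsum_mem_eq_finite_toFinset_sum _ (Set.toFinite (spanningSubsets a μ _))] at hc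
  have hpoly : (1 : MvPolynomial (Fin n) ℂ) =
      ∑ q ∈ (armPoints_finite a μ).toFinset,
        ∑ ℓ ∈ (Set.toFinite (spanningSubsets a μ q)).toFinset,
          C (c q ℓ) * ∏ i ∈ ℓᶜ, (linForm (a i) + C (μ i)) := by
    apply IsFractionRing.injective _ (FractionRing (MvPolynomial (Fin n) ℂ))
    have := congrArg (· * ∏ i, affForm a μ i) hc
    simp only [sum_mul, mul_assoc,
      prod_inv_mul_prod_eq_prod_compl fun i => affForm_ne_zero (ha i) μ, compl_univ,
      prod_empty] at this
    simpa only [map_one, map_sum, map_mul, map_prod, affForm] using this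
  have hval := congrArg (eval p) hpoly
  simp only [map_one, map_sum, map_mul, map_prod, eval_C, eval_add, eval_linForm,
    sum_spanningSubsets_eval hp] at hval
  exact (eq_inv_of_mul_eq_one_left hval.symm).trans (prod_inv_distrib _).symm

/-- In any decomposition
`∏ i, 1/(a i + μ i) = ∑_{p ∈ P(X,μ)} ∑_{ℓ ∈ L(X_p)} c_ℓ ∏_{i ∈ ℓ} 1/(a i + μ i)`
in `K = ℂ(x_1, …, x_n)`, the coefficient attached to the full set `ℓ = X_p` is uniquely
determined and equals `c_{X_p} = ∏_{i ∉ X_p} 1/(⟨a i | p⟩ + μ i)`. -/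
theorem coefficient_of_full_set {n m : ℕ} (a : Fin m → (Fin n → ℂ)) (μ : Fin m → ℂ)
    (ha : ∀ i, a i ≠ 0)
    (hspan : Submodule.span ℂ (Set.range a) = ⊤)
    (c : (Fin n → ℂ) → Finset (Fin m) → ℂ)
    (hc : ∏ i, (affForm a μ i)⁻¹ =
        ∑ᶠ p ∈ armPoints a μ,
          ∑ᶠ ℓ ∈ {ℓ : Finset (Fin m) |
              (ℓ : Set (Fin m)) ⊆ Xp a μ p ∧ Submodule.span ℂ (a '' (ℓ : Set (Fin m))) = ⊤},
            algebraMap (MvPolynomial (Fin n) ℂ) (FractionRing (MvPolynomial (Fin n) ℂ))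
                (C (c p ℓ)) *
              ∏ i ∈ ℓ, (affForm a μ i)⁻¹) :
    ∀ p ∈ armPoints a μ,
      c p (XpFinset a μ p) = ∏ i ∈ (XpFinset a μ p)ᶜ, ((∑ j, a i j * p j) + μ i)⁻¹ :=
  coefficient_of_full_set_general a μ ha c hc
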